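/- (Parabolic-like presentation) For n≥3, the group presented by generators σ_1,…,σ_n, a and relations: (1) σ_iσ_j=σ_jσ_i for 1≤i,j≤n with |i−j|≥2; (2) σ_iσ_{i+1}σ_i=σ_{i+1}σ_iσ_{i+1} for 1≤i≤n−1; (3) σ_1aσ_1=aσ_1a; (4) σ_3aσ_3=aσ_3a; (5) σ_ia=aσ_i for 4≤i≤n; (6) σ_3σ_2aσ_3=σ_2aσ_3σ_2, is isomorphic to the affine braid group B(Ã_n) via the map sending σ_i ↦ σ_i and a ↦ σ_3σ_4⋯σ_n a_{n+1} σ_n^{-1}⋯σ_4^{-1}σ_3^{-1} (whose inverse sends a_{n+1} to σ_n^{-1}⋯σ_3^{-1} a σ_3⋯σ_n). -/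
import Mathlib
/-- Relators of the affine braid group `B(Ã_n)`: generator `some i` (`i : Fin n`)
stands for `σ_{i+1}`, and `none` stands for `a_{n+1}`. -/
def braidRelsAff (n : ℕ) : Set (FreeGroup (Option (Fin n))) :=
  { r | (∃ i j : Fin n, (i : ℕ) + 2 ≤ (j : ℕ) ∧
          r = FreeGroup.of (some i) * FreeGroup.of (some j) *
              (FreeGroup.of (some j) * FreeGroup.of (some i))⁻¹) ∨
        (∃ i j : Fin n, (j : ℕ) = (i : ℕ) + 1 ∧
          r = FreeGroup.of (some i) * FreeGroup.of (some j) * FreeGroup.of (some i) *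
              (FreeGroup.of (some j) * FreeGroup.of (some i) * FreeGroup.of (some j))⁻¹) ∨
        (∃ i : Fin n, 1 ≤ (i : ℕ) ∧ (i : ℕ) + 2 ≤ n ∧
          r = FreeGroup.of (some i) * FreeGroup.of none *
              (FreeGroup.of none * FreeGroup.of (some i))⁻¹) ∨
        (∃ i : Fin n, ((i : ℕ) = 0 ∨ (i : ℕ) + 1 = n) ∧
          r = FreeGroup.of (some i) * FreeGroup.of none * FreeGroup.of (some i) *
              (FreeGroup.of none * FreeGroup.of (some i) * FreeGroup.of none)⁻¹) }

/-- The affine (`Ã`-type) braid group `B(Ã_n)`, with generators `σ_1, …, σ_n` and `a_{n+1}`. -/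
abbrev BraidAff (n : ℕ) : Type := PresentedGroup (braidRelsAff n)

/-- The word `σ_3 σ_4 ⋯ σ_n` in `B(Ã_n)`. -/
noncomputable def conjWord (n : ℕ) : BraidAff n :=
  (((List.finRange n).drop 2).map fun i => (PresentedGroup.of (some i) : BraidAff n)).prod

/-- `a_3 = σ_3 ⋯ σ_n a_{n+1} σ_n⁻¹ ⋯ σ_3⁻¹` in `B(Ã_n)`. -/
noncomputable def a3 (n : ℕ) : BraidAff n :=
  conjWord n * PresentedGroup.of none * (conjWord n)⁻¹

/-- Relators of the parabolic-like presentation of `B(Ã_n)`: generator `some i`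
stands for `σ_{i+1}` and `none` stands for `a`. -/
def parabRels (n : ℕ) : Set (FreeGroup (Option (Fin n))) :=
  { r | (∃ i j : Fin n, (i : ℕ) + 2 ≤ (j : ℕ) ∧
          r = FreeGroup.of (some i) * FreeGroup.of (some j) *
              (FreeGroup.of (some j) * FreeGroup.of (some i))⁻¹) ∨
        (∃ i j : Fin n, (j : ℕ) = (i : ℕ) + 1 ∧
          r = FreeGroup.of (some i) * FreeGroup.of (some j) * FreeGroup.of (some i) *
              (FreeGroup.of (some j) * FreeGroup.of (some i) * FreeGroup.of (some j))⁻¹) ∨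
        (∃ i : Fin n, ((i : ℕ) = 0 ∨ (i : ℕ) = 2) ∧
          r = FreeGroup.of (some i) * FreeGroup.of none * FreeGroup.of (some i) *
              (FreeGroup.of none * FreeGroup.of (some i) * FreeGroup.of none)⁻¹) ∨
        (∃ i : Fin n, 3 ≤ (i : ℕ) ∧
          r = FreeGroup.of (some i) * FreeGroup.of none *
              (FreeGroup.of none * FreeGroup.of (some i))⁻¹) ∨
        (∃ i j : Fin n, (i : ℕ) = 1 ∧ (j : ℕ) = 2 ∧
          r = FreeGroup.of (some j) * FreeGroup.of (some i) * FreeGroup.of none *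
              FreeGroup.of (some j) *
              (FreeGroup.of (some i) * FreeGroup.of none * FreeGroup.of (some j) *
                FreeGroup.of (some i))⁻¹) }

namespace Stmt5Aux

variable {G : Type*} [Group G]

/-- `Pw s a m = s a * s (a+1) * ⋯ * s (a+m-1)`. -/
def Pw (s : ℕ → G) (a m : ℕ) : G := ((List.range' a m).map s).prod

@[simp] lemma Pw_zero (s : ℕ → G) (a : ℕ) : Pw s a 0 = 1 := by simp [Pw]

lemma Pw_succ_left (s : ℕ → G) (a m : ℕ) : Pw s a (m + 1) = s a * Pw s (a + 1) m := by
  simp [Pw, List.range'_succ]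

lemma Pw_succ_right (s : ℕ → G) (a m : ℕ) : Pw s a (m + 1) = Pw s a m * s (a + m) := by
  rw [Pw, List.range'_1_concat]
  simp [Pw]

lemma commute_Pw {s : ℕ → G} {x : G} {a m : ℕ}
    (h : ∀ i, a ≤ i → i < a + m → Commute x (s i)) : Commute x (Pw s a m) := by
  apply Commute.list_prod_right
  intro y hy
  simp only [List.mem_map, List.mem_range'] at hy
  obtain ⟨i, ⟨j, hj, rfl⟩, rfl⟩ := hy
  exact h _ (by omega) (by omega)

section keys

variable {a b c u v x y t s1 s2 w : G}

lemma inv_comm (h : x * c = c * x) : x * c⁻¹ = c⁻¹ * x := ((Commute.inv_right h : Commute x c⁻¹)).eq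

lemma key1 (hb : a * b * a = b * a * b) (hu : a * u = u * a) (h2 : b * u * b = u * b * u) :
    a * (b * u * b⁻¹) * a = (b * u * b⁻¹) * a * (b * u * b⁻¹) := by
  have hu' : u * a⁻¹ = a⁻¹ * u := inv_comm hu.symm
  have h1 : b⁻¹ * a * b = a * b * a⁻¹ := by
    calc b⁻¹ * a * b = b⁻¹ * (a * b * a) * a⁻¹ := by group
    _ = b⁻¹ * (b * a * b) * a⁻¹ := by rw [hb]
    _ = a * b * a⁻¹ := by group
  calc a * (b * u * b⁻¹) * a
      = a * b * u * (b⁻¹ * a * b) * b⁻¹ := by group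
    _ = a * b * u * (a * b * a⁻¹) * b⁻¹ := by rw [h1]
    _ = a * b * (u * a) * (b * a⁻¹ * b⁻¹) := by group
    _ = a * b * (a * u) * (b * a⁻¹ * b⁻¹) := by rw [← hu]
    _ = (a * b * a) * (u * b * (a⁻¹ * b⁻¹)) := by group
    _ = (b * a * b) * (u * b * (a⁻¹ * b⁻¹)) := by rw [hb]
    _ = b * a * (b * u * b) * (a⁻¹ * b⁻¹) := by group
    _ = b * a * (u * b * u) * (a⁻¹ * b⁻¹) := by rw [h2]
    _ = b * (a * u) * (b * u * (a⁻¹ * b⁻¹)) := by group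
    _ = b * (u * a) * (b * u * (a⁻¹ * b⁻¹)) := by rw [hu]
    _ = b * u * (a * b) * (u * a⁻¹) * b⁻¹ := by group
    _ = b * u * (a * b) * (a⁻¹ * u) * b⁻¹ := by rw [hu']
    _ = b * u * (a * b * a⁻¹) * (u * b⁻¹) := by group
    _ = b * u * (b⁻¹ * a * b) * (u * b⁻¹) := by rw [← h1]
    _ = (b * u * b⁻¹) * a * (b * u * b⁻¹) := by group

lemma key2 (hc : x * c = c * x) (h : x * t * x = t * x * t) :
    x * (c * t * c⁻¹) * x = (c * t * c⁻¹) * x * (c * t * c⁻¹) := by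
  have hc' : x * c⁻¹ = c⁻¹ * x := inv_comm hc
  calc x * (c * t * c⁻¹) * x
      = (x * c) * t * (c⁻¹ * x) := by group
    _ = (c * x) * t * (c⁻¹ * x) := by rw [hc]
    _ = (c * x) * t * (x * c⁻¹) := by rw [← hc']
    _ = c * (x * t * x) * c⁻¹ := by group
    _ = c * (t * x * t) * c⁻¹ := by rw [h]
    _ = c * t * (x * c⁻¹) * (c * t * c⁻¹) := by group
    _ = c * t * (c⁻¹ * x) * (c * t * c⁻¹) := by rw [hc']
    _ = (c * t * c⁻¹) * x * (c * t * c⁻¹) := by group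

lemma key2' (hc : x * c = c * x) (h : x * t * x = t * x * t) :
    x * (c⁻¹ * t * c) * x = (c⁻¹ * t * c) * x * (c⁻¹ * t * c) := by
  have := key2 (inv_comm hc) h
  simpa using this

lemma key3 (h2 : b * u * b = u * b * u) :
    b * (b * u * b⁻¹) * b = (b * u * b⁻¹) * b * (b * u * b⁻¹) := by
  calc b * (b * u * b⁻¹) * b = b * (b * u * b) * b⁻¹ := by group
    _ = b * (u * b * u) * b⁻¹ := by rw [h2]
    _ = (b * u * b⁻¹) * b * (b * u * b⁻¹) := by group

lemma key4 (hb : s1 * s2 * s1 = s2 * s1 * s2) (hv : s1 * v = v * s1) :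
    s2 * s1 * (s2 * v * s2⁻¹) * s2 = s1 * (s2 * v * s2⁻¹) * s2 * s1 := by
  calc s2 * s1 * (s2 * v * s2⁻¹) * s2 = s2 * s1 * s2 * v := by group
    _ = (s1 * s2 * s1) * v := by rw [← hb]
    _ = s1 * s2 * (s1 * v) := by group
    _ = s1 * s2 * (v * s1) := by rw [hv]
    _ = s1 * (s2 * v * s2⁻¹) * s2 * s1 := by group

lemma key5 (hb : s1 * s2 * s1 = s2 * s1 * s2) (h6 : s2 * s1 * b * s2 = s1 * b * s2 * s1) :
    (s2 * s1 * s2⁻¹) * b = b * (s2 * s1 * s2⁻¹) := by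
  calc (s2 * s1 * s2⁻¹) * b = s1⁻¹ * (s1 * s2 * s1) * s2⁻¹ * b := by group
    _ = s1⁻¹ * (s2 * s1 * s2) * s2⁻¹ * b := by rw [hb]
    _ = s1⁻¹ * (s2 * s1 * b * s2) * s2⁻¹ := by group
    _ = s1⁻¹ * (s1 * b * s2 * s1) * s2⁻¹ := by rw [h6]
    _ = b * (s2 * s1 * s2⁻¹) := by group

lemma key6 (hcb : c * b = b * c) (hw : w * b * w = b * w * b) :
    (c⁻¹ * w * c) * b * (c⁻¹ * w * c) = b * (c⁻¹ * w * c) * b := by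
  have hcb' : c⁻¹ * b = b * c⁻¹ := (inv_comm hcb.symm).symm
  calc (c⁻¹ * w * c) * b * (c⁻¹ * w * c) = c⁻¹ * w * (c * b) * c⁻¹ * w * c := by group
    _ = c⁻¹ * w * (b * c) * c⁻¹ * w * c := by rw [hcb]
    _ = c⁻¹ * (w * b * w) * c := by group
    _ = c⁻¹ * (b * w * b) * c := by rw [hw]
    _ = (c⁻¹ * b) * w * b * c := by group
    _ = (b * c⁻¹) * w * b * c := by rw [hcb']
    _ = b * c⁻¹ * w * (c * (c⁻¹ * b) * c) := by group
    _ = b * c⁻¹ * w * (c * (b * c⁻¹) * c) := by rw [hcb']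
    _ = b * (c⁻¹ * w * c) * b := by group

lemma conj_rel_transfer (h : x * y * x = y * x * y) :
    (c⁻¹ * x * c) * (c⁻¹ * y * c) * (c⁻¹ * x * c)
      = (c⁻¹ * y * c) * (c⁻¹ * x * c) * (c⁻¹ * y * c) := by
  calc (c⁻¹ * x * c) * (c⁻¹ * y * c) * (c⁻¹ * x * c) = c⁻¹ * (x * y * x) * c := by group
    _ = c⁻¹ * (y * x * y) * c := by rw [h]
    _ = (c⁻¹ * y * c) * (c⁻¹ * x * c) * (c⁻¹ * y * c) := by group

end keys


structure BraidData (n : ℕ) {G : Type*} [Group G] (s : ℕ → G) : Prop where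
  comm : ∀ i j, i + 2 ≤ j → j < n → Commute (s i) (s j)
  braid : ∀ i, i + 1 < n → s i * s (i + 1) * s i = s (i + 1) * s i * s (i + 1)

namespace BraidData
variable {n : ℕ} {s : ℕ → G} (D : BraidData n s)
include D
/-- σ-shift: `(s a ⋯ s (a+m-1)) * s j = s (j+1) * (s a ⋯ s (a+m-1))` when `a ≤ j < j+1 < a+m ≤ n`. -/
lemma shift : ∀ m a j, a ≤ j → j + 1 < a + m → a + m ≤ n →
    Pw s a m * s j = s (j + 1) * Pw s a m := by
  intro m
  induction m with
  | zero => intro a j h1 h2 h3; omega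
  | succ m ih =>
    intro a j h1 h2 h3
    rcases eq_or_lt_of_le h1 with heq | hlt
    · subst heq
      obtain ⟨k, rfl⟩ : ∃ k, m = k + 1 := ⟨m - 1, by omega⟩
      have hc : Commute (s a) (Pw s (a + 2) k) :=
        commute_Pw (fun i hi1 hi2 => D.comm a i (by omega) (by omega))
      have hbr := D.braid a (by omega)
      rw [Pw_succ_left, Pw_succ_left]
      calc s a * (s (a + 1) * Pw s (a + 1 + 1) k) * s a
          = s a * s (a + 1) * (Pw s (a + 2) k * s a) := by
            rw [show a + 1 + 1 = a + 2 from rfl]; group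
        _ = s a * s (a + 1) * (s a * Pw s (a + 2) k) := by rw [← hc.eq]
        _ = (s a * s (a + 1) * s a) * Pw s (a + 2) k := by group
        _ = (s (a + 1) * s a * s (a + 1)) * Pw s (a + 2) k := by rw [hbr]
        _ = s (a + 1) * (s a * (s (a + 1) * Pw s (a + 1 + 1) k)) := by
            rw [show a + 1 + 1 = a + 2 from rfl]; group
    · -- a < j
      have hcomm : Commute (s a) (s (j + 1)) := D.comm a (j + 1) (by omega) (by omega)
      rw [Pw_succ_left]
      calc s a * Pw s (a + 1) m * s j
          = s a * (Pw s (a + 1) m * s j) := by group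
        _ = s a * (s (j + 1) * Pw s (a + 1) m) := by
            rw [ih (a + 1) j (by omega) (by omega) (by omega)]
        _ = (s a * s (j + 1)) * Pw s (a + 1) m := by group
        _ = (s (j + 1) * s a) * Pw s (a + 1) m := by rw [hcomm.eq]
        _ = s (j + 1) * (s a * Pw s (a + 1) m) := by group


section Forward

variable {t : G} (hn : 3 ≤ n)
include hn

lemma fwd_u (h3 : ∀ i, 1 ≤ i → i + 2 ≤ n → Commute (s i) t)
    (h4n : s (n - 1) * t * s (n - 1) = t * s (n - 1) * t) :
    ∀ d k, n - 1 - k = d → 2 ≤ k → k < n →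
    s k * (Pw s (k + 1) (n - 1 - k) * t * (Pw s (k + 1) (n - 1 - k))⁻¹) * s k
      = (Pw s (k + 1) (n - 1 - k) * t * (Pw s (k + 1) (n - 1 - k))⁻¹) * s k *
        (Pw s (k + 1) (n - 1 - k) * t * (Pw s (k + 1) (n - 1 - k))⁻¹) := by
  intro d
  induction d with
  | zero =>
    intro k hd h2 hk
    obtain rfl : k = n - 1 := by omega
    rw [hd, Pw_zero]
    simpa using h4n
  | succ d ih =>
    intro k hd h2 hk
    have hk1 : k + 1 < n := by omega
    have hrec := ih (k + 1) (by omega) (by omega) (by omega)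
    have hPw : Pw s (k + 1) (n - 1 - k) = s (k + 1) * Pw s (k + 2) (n - 1 - (k + 1)) := by
      rw [show n - 1 - k = (n - 1 - (k + 1)) + 1 by omega, Pw_succ_left]
    set u : G := Pw s (k + 2) (n - 1 - (k + 1)) * t * (Pw s (k + 2) (n - 1 - (k + 1)))⁻¹ with hu
    have hcm : Commute (s k) u := by
      have hp : Commute (s k) (Pw s (k + 2) (n - 1 - (k + 1))) :=
        commute_Pw (fun i hi1 hi2 => D.comm k i (by omega) (by omega))
      exact (hp.mul_right (h3 k (by omega) (by omega))).mul_right hp.inv_right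
    have e : Pw s (k + 1) (n - 1 - k) * t * (Pw s (k + 1) (n - 1 - k))⁻¹
        = s (k + 1) * u * (s (k + 1))⁻¹ := by
      rw [hPw, hu]; group
    rw [e]
    exact key1 (D.braid k hk1) hcm.eq hrec

lemma fwdA0 (h40 : s 0 * t * s 0 = t * s 0 * t) :
    s 0 * (Pw s 2 (n - 2) * t * (Pw s 2 (n - 2))⁻¹) * s 0
      = (Pw s 2 (n - 2) * t * (Pw s 2 (n - 2))⁻¹) * s 0 *
        (Pw s 2 (n - 2) * t * (Pw s 2 (n - 2))⁻¹) := by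
  have hc : Commute (s 0) (Pw s 2 (n - 2)) :=
    commute_Pw (fun i hi1 hi2 => D.comm 0 i (by omega) (by omega))
  exact key2 hc.eq h40

omit D hn in
lemma hC2 (hn : 3 ≤ n) : Pw s 2 (n - 2) = s 2 * Pw s 3 (n - 3) := by
  rw [show n - 2 = (n - 3) + 1 by omega, Pw_succ_left]

lemma fwdA2 (h3 : ∀ i, 1 ≤ i → i + 2 ≤ n → Commute (s i) t)
    (h4n : s (n - 1) * t * s (n - 1) = t * s (n - 1) * t) :
    s 2 * (Pw s 2 (n - 2) * t * (Pw s 2 (n - 2))⁻¹) * s 2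
      = (Pw s 2 (n - 2) * t * (Pw s 2 (n - 2))⁻¹) * s 2 *
        (Pw s 2 (n - 2) * t * (Pw s 2 (n - 2))⁻¹) := by
  have h := D.fwd_u hn h3 h4n (n - 1 - 2) 2 rfl le_rfl (by omega)
  rw [show n - 1 - 2 = n - 3 by omega] at h
  rw [show (2 : ℕ) + 1 = 3 from rfl] at h
  have e : Pw s 2 (n - 2) * t * (Pw s 2 (n - 2))⁻¹
      = s 2 * (Pw s 3 (n - 3) * t * (Pw s 3 (n - 3))⁻¹) * (s 2)⁻¹ := by
    rw [hC2 (s:=s) hn]; group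
  rw [e]
  exact key3 h

lemma fwdAhigh (h3 : ∀ i, 1 ≤ i → i + 2 ≤ n → Commute (s i) t) :
    ∀ j, 2 ≤ j → j + 1 < n →
    s (j + 1) * (Pw s 2 (n - 2) * t * (Pw s 2 (n - 2))⁻¹)
      = (Pw s 2 (n - 2) * t * (Pw s 2 (n - 2))⁻¹) * s (j + 1) := by
  intro j h2 hj
  have hs := D.shift (n - 2) 2 j (by omega) (by omega) (by omega)
  have h3j : Commute (s j) t := h3 j (by omega) (by omega)
  set C : G := Pw s 2 (n - 2) with hC
  calc s (j + 1) * (C * t * C⁻¹) = (s (j + 1) * C) * t * C⁻¹ := by group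
    _ = (C * s j) * t * C⁻¹ := by rw [← hs]
    _ = C * (s j * t) * C⁻¹ := by group
    _ = C * (t * s j) * C⁻¹ := by rw [h3j.eq]
    _ = C * t * C⁻¹ * ((C * s j) * C⁻¹) := by group
    _ = C * t * C⁻¹ * ((s (j + 1) * C) * C⁻¹) := by rw [hs]
    _ = (C * t * C⁻¹) * s (j + 1) := by group

lemma fwdA6 (h3 : ∀ i, 1 ≤ i → i + 2 ≤ n → Commute (s i) t) :
    s 2 * s 1 * (Pw s 2 (n - 2) * t * (Pw s 2 (n - 2))⁻¹) * s 2
      = s 1 * (Pw s 2 (n - 2) * t * (Pw s 2 (n - 2))⁻¹) * s 2 * s 1 := by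
  have hv : Commute (s 1) (Pw s 3 (n - 3) * t * (Pw s 3 (n - 3))⁻¹) := by
    have hp : Commute (s 1) (Pw s 3 (n - 3)) :=
      commute_Pw (fun i hi1 hi2 => D.comm 1 i (by omega) (by omega))
    exact (hp.mul_right (h3 1 le_rfl (by omega))).mul_right hp.inv_right
  have e : Pw s 2 (n - 2) * t * (Pw s 2 (n - 2))⁻¹
      = s 2 * (Pw s 3 (n - 3) * t * (Pw s 3 (n - 3))⁻¹) * (s 2)⁻¹ := by
    rw [hC2 (s:=s) hn]; group
  rw [e]
  exact key4 (D.braid 1 (by omega)) hv.eq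

end Forward

section Backward

variable {b : G} (hn : 3 ≤ n)
include hn

omit hn in
lemma bwd_w (k5 : ∀ i, 3 ≤ i → i < n → Commute (s i) b)
    (k4 : s 2 * b * s 2 = b * s 2 * b) :
    ∀ k, 2 ≤ k → k < n →
    (Pw s 2 (k - 2) * s k * (Pw s 2 (k - 2))⁻¹) * b * (Pw s 2 (k - 2) * s k * (Pw s 2 (k - 2))⁻¹)
      = b * (Pw s 2 (k - 2) * s k * (Pw s 2 (k - 2))⁻¹) * b := by
  intro k
  induction k with
  | zero => omega
  | succ k ih =>
    intro h2 hk
    rcases Nat.lt_or_ge k 2 with hklt | hkge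
    · -- k + 1 = 2
      obtain rfl : k = 1 := by omega
      norm_num [Pw_zero]
      simpa using k4
    · have hM : Commute (s (k + 1)) (Pw s 2 (k - 2)) :=
        commute_Pw (fun i hi1 hi2 => (D.comm i (k + 1) (by omega) (by omega)).symm)
      have e2 : s k * s (k + 1) * (s k)⁻¹ = (s (k + 1))⁻¹ * s k * s (k + 1) := by
        calc s k * s (k + 1) * (s k)⁻¹
            = (s (k + 1))⁻¹ * (s (k + 1) * s k * s (k + 1)) * (s k)⁻¹ := by group
          _ = (s (k + 1))⁻¹ * (s k * s (k + 1) * s k) * (s k)⁻¹ := by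
              rw [← D.braid k (by omega)]
          _ = (s (k + 1))⁻¹ * s k * s (k + 1) := by group
      set M : G := Pw s 2 (k - 2) with hMdef
      have e : Pw s 2 (k + 1 - 2) * s (k + 1) * (Pw s 2 (k + 1 - 2))⁻¹
          = (s (k + 1))⁻¹ * (M * s k * M⁻¹) * s (k + 1) := by
        rw [show k + 1 - 2 = (k - 2) + 1 by omega, Pw_succ_right,
          show 2 + (k - 2) = k by omega, ← hMdef]
        calc M * s k * s (k + 1) * (M * s k)⁻¹
            = M * (s k * s (k + 1) * (s k)⁻¹) * M⁻¹ := by group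
          _ = M * ((s (k + 1))⁻¹ * s k * s (k + 1)) * M⁻¹ := by rw [e2]
          _ = (M * (s (k + 1))⁻¹) * s k * (s (k + 1) * M⁻¹) := by group
          _ = ((s (k + 1))⁻¹ * M) * s k * (s (k + 1) * M⁻¹) := by rw [← hM.inv_left.eq]
          _ = ((s (k + 1))⁻¹ * M) * s k * (M⁻¹ * s (k + 1)) := by rw [hM.inv_right.eq]
          _ = (s (k + 1))⁻¹ * (M * s k * M⁻¹) * s (k + 1) := by group
      rw [e]
      exact key6 (k5 (k + 1) (by omega) hk).eq (ih (by omega) (by omega))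

lemma bwdT0 (k3 : s 0 * b * s 0 = b * s 0 * b) :
    s 0 * ((Pw s 2 (n - 2))⁻¹ * b * Pw s 2 (n - 2)) * s 0
      = ((Pw s 2 (n - 2))⁻¹ * b * Pw s 2 (n - 2)) * s 0 *
        ((Pw s 2 (n - 2))⁻¹ * b * Pw s 2 (n - 2)) := by
  have hc : Commute (s 0) (Pw s 2 (n - 2)) :=
    commute_Pw (fun i hi1 hi2 => D.comm 0 i (by omega) (by omega))
  exact key2' hc.eq k3

lemma bwdTn (k5 : ∀ i, 3 ≤ i → i < n → Commute (s i) b)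
    (k4 : s 2 * b * s 2 = b * s 2 * b) :
    s (n - 1) * ((Pw s 2 (n - 2))⁻¹ * b * Pw s 2 (n - 2)) * s (n - 1)
      = ((Pw s 2 (n - 2))⁻¹ * b * Pw s 2 (n - 2)) * s (n - 1) *
        ((Pw s 2 (n - 2))⁻¹ * b * Pw s 2 (n - 2)) := by
  have hw := D.bwd_w k5 k4 (n - 1) (by omega) (by omega)
  rw [show n - 1 - 2 = n - 3 by omega] at hw
  have hC : Pw s 2 (n - 2) = Pw s 2 (n - 3) * s (n - 1) := by
    rw [show n - 2 = (n - 3) + 1 by omega, Pw_succ_right, show 2 + (n - 3) = n - 1 by omega]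
  have e2 : (Pw s 2 (n - 2))⁻¹ * (Pw s 2 (n - 3) * s (n - 1) * (Pw s 2 (n - 3))⁻¹) *
      Pw s 2 (n - 2) = s (n - 1) := by
    rw [hC]; group
  calc s (n - 1) * ((Pw s 2 (n - 2))⁻¹ * b * Pw s 2 (n - 2)) * s (n - 1)
      = ((Pw s 2 (n - 2))⁻¹ * (Pw s 2 (n - 3) * s (n - 1) * (Pw s 2 (n - 3))⁻¹) * Pw s 2 (n - 2)) *
        ((Pw s 2 (n - 2))⁻¹ * b * Pw s 2 (n - 2)) *
        ((Pw s 2 (n - 2))⁻¹ * (Pw s 2 (n - 3) * s (n - 1) * (Pw s 2 (n - 3))⁻¹) *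
          Pw s 2 (n - 2)) := by rw [e2]
    _ = ((Pw s 2 (n - 2))⁻¹ * b * Pw s 2 (n - 2)) *
        ((Pw s 2 (n - 2))⁻¹ * (Pw s 2 (n - 3) * s (n - 1) * (Pw s 2 (n - 3))⁻¹) * Pw s 2 (n - 2)) *
        ((Pw s 2 (n - 2))⁻¹ * b * Pw s 2 (n - 2)) := conj_rel_transfer hw
    _ = ((Pw s 2 (n - 2))⁻¹ * b * Pw s 2 (n - 2)) * s (n - 1) *
        ((Pw s 2 (n - 2))⁻¹ * b * Pw s 2 (n - 2)) := by rw [e2]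

lemma bwdTmid (k5 : ∀ i, 3 ≤ i → i < n → Commute (s i) b) :
    ∀ j, 2 ≤ j → j + 1 < n →
    s j * ((Pw s 2 (n - 2))⁻¹ * b * Pw s 2 (n - 2))
      = ((Pw s 2 (n - 2))⁻¹ * b * Pw s 2 (n - 2)) * s j := by
  intro j h2 hj
  have hs := D.shift (n - 2) 2 j (by omega) (by omega) (by omega)
  have hb1 : Commute (s (j + 1)) b := k5 (j + 1) (by omega) hj
  set C : G := Pw s 2 (n - 2) with hC
  calc s j * (C⁻¹ * b * C) = C⁻¹ * ((C * s j) * C⁻¹) * b * C := by group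
    _ = C⁻¹ * ((s (j + 1) * C) * C⁻¹) * b * C := by rw [hs]
    _ = C⁻¹ * (s (j + 1) * b) * C := by group
    _ = C⁻¹ * (b * s (j + 1)) * C := by rw [hb1.eq]
    _ = C⁻¹ * b * C * (C⁻¹ * (s (j + 1) * C)) := by group
    _ = C⁻¹ * b * C * (C⁻¹ * (C * s j)) := by rw [← hs]
    _ = (C⁻¹ * b * C) * s j := by group

lemma bwdT1 (k6 : s 2 * s 1 * b * s 2 = s 1 * b * s 2 * s 1) :
    s 1 * ((Pw s 2 (n - 2))⁻¹ * b * Pw s 2 (n - 2))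
      = ((Pw s 2 (n - 2))⁻¹ * b * Pw s 2 (n - 2)) * s 1 := by
  have hX : (s 2 * s 1 * (s 2)⁻¹) * b = b * (s 2 * s 1 * (s 2)⁻¹) :=
    key5 (D.braid 1 (by omega)) k6
  have h1P : Commute (s 1) (Pw s 3 (n - 3)) :=
    commute_Pw (fun i hi1 hi2 => D.comm 1 i (by omega) (by omega))
  set C : G := Pw s 2 (n - 2) with hCdef
  have e : C * s 1 * C⁻¹ = s 2 * s 1 * (s 2)⁻¹ := by
    rw [hCdef, hC2 (s:=s) hn]
    calc s 2 * Pw s 3 (n - 3) * s 1 * (s 2 * Pw s 3 (n - 3))⁻¹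
        = s 2 * (Pw s 3 (n - 3) * s 1) * ((Pw s 3 (n - 3))⁻¹ * (s 2)⁻¹) := by group
      _ = s 2 * (s 1 * Pw s 3 (n - 3)) * ((Pw s 3 (n - 3))⁻¹ * (s 2)⁻¹) := by rw [← h1P.eq]
      _ = s 2 * s 1 * (s 2)⁻¹ := by group
  calc s 1 * (C⁻¹ * b * C) = C⁻¹ * ((C * s 1 * C⁻¹) * b) * C := by group
    _ = C⁻¹ * ((s 2 * s 1 * (s 2)⁻¹) * b) * C := by rw [e]
    _ = C⁻¹ * (b * (s 2 * s 1 * (s 2)⁻¹)) * C := by rw [hX]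
    _ = C⁻¹ * (b * (C * s 1 * C⁻¹)) * C := by rw [← e]
    _ = (C⁻¹ * b * C) * s 1 := by group

end Backward

end BraidData
end Stmt5Aux
namespace Stmt5Aux

open PresentedGroup

lemma mk_rel {α : Type*} {rels : Set (FreeGroup α)} {r : FreeGroup α} (h : r ∈ rels) :
    PresentedGroup.mk rels r = 1 :=
  (QuotientGroup.eq_one_iff r).mpr (Subgroup.subset_normalClosure h)

lemma rel_eq {α : Type*} {rels : Set (FreeGroup α)} {u v : FreeGroup α}
    (h : u * v⁻¹ ∈ rels) : PresentedGroup.mk rels u = PresentedGroup.mk rels v := by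
  have h1 := mk_rel h
  rw [map_mul, map_inv, mul_inv_eq_one] at h1
  exact h1

lemma rel_comm {α : Type*} {rels : Set (FreeGroup α)} {x y : α}
    (h : FreeGroup.of x * FreeGroup.of y * (FreeGroup.of y * FreeGroup.of x)⁻¹ ∈ rels) :
    (PresentedGroup.of x : PresentedGroup rels) * PresentedGroup.of y
      = PresentedGroup.of y * PresentedGroup.of x := by
  have h1 := rel_eq h
  rw [map_mul, map_mul] at h1
  exact h1

lemma rel_braid {α : Type*} {rels : Set (FreeGroup α)} {x y : α}
    (h : FreeGroup.of x * FreeGroup.of y * FreeGroup.of x *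
        (FreeGroup.of y * FreeGroup.of x * FreeGroup.of y)⁻¹ ∈ rels) :
    (PresentedGroup.of x : PresentedGroup rels) * PresentedGroup.of y * PresentedGroup.of x
      = PresentedGroup.of y * PresentedGroup.of x * PresentedGroup.of y := by
  have h1 := rel_eq h
  rw [map_mul, map_mul, map_mul, map_mul] at h1
  exact h1

lemma rel_four {α : Type*} {rels : Set (FreeGroup α)} {x y z w x' y' z' w' : α}
    (h : FreeGroup.of x * FreeGroup.of y * FreeGroup.of z * FreeGroup.of w *
        (FreeGroup.of x' * FreeGroup.of y' * FreeGroup.of z' * FreeGroup.of w')⁻¹ ∈ rels) :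
    (PresentedGroup.of x : PresentedGroup rels) * PresentedGroup.of y * PresentedGroup.of z *
        PresentedGroup.of w
      = PresentedGroup.of x' * PresentedGroup.of y' * PresentedGroup.of z' *
        PresentedGroup.of w' := by
  have h1 := rel_eq h
  rw [map_mul, map_mul, map_mul, map_mul, map_mul, map_mul] at h1
  exact h1

/-- The generators of a presented group over `Option (Fin n)`, as a family indexed by `ℕ`. -/
def sOf (n : ℕ) (rels : Set (FreeGroup (Option (Fin n)))) : ℕ → PresentedGroup rels :=
  fun i => if h : i < n then PresentedGroup.of (some ⟨i, h⟩) else 1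

lemma sOf_lt {n : ℕ} {rels : Set (FreeGroup (Option (Fin n)))} {i : ℕ} (h : i < n) :
    sOf n rels i = PresentedGroup.of (some ⟨i, h⟩) := dif_pos h

lemma sOf_coe {n : ℕ} {rels : Set (FreeGroup (Option (Fin n)))} (i : Fin n) :
    sOf n rels (i : ℕ) = PresentedGroup.of (some i) := by
  rw [sOf_lt i.isLt]

section Inst

variable {n : ℕ}

lemma braidDataB (n : ℕ) : BraidData n (sOf n (braidRelsAff n)) where
  comm i j hij hj := by
    have hi : i < n := by omega
    rw [sOf_lt hi, sOf_lt hj]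
    exact rel_comm (Or.inl ⟨⟨i, hi⟩, ⟨j, hj⟩, hij, rfl⟩)
  braid i hi := by
    have hi' : i < n := by omega
    rw [sOf_lt hi', sOf_lt hi]
    exact rel_braid (Or.inr (Or.inl ⟨⟨i, hi'⟩, ⟨i + 1, hi⟩, rfl, rfl⟩))

lemma braidDataP (n : ℕ) : BraidData n (sOf n (parabRels n)) where
  comm i j hij hj := by
    have hi : i < n := by omega
    rw [sOf_lt hi, sOf_lt hj]
    exact rel_comm (Or.inl ⟨⟨i, hi⟩, ⟨j, hj⟩, hij, rfl⟩)
  braid i hi := by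
    have hi' : i < n := by omega
    rw [sOf_lt hi', sOf_lt hi]
    exact rel_braid (Or.inr (Or.inl ⟨⟨i, hi'⟩, ⟨i + 1, hi⟩, rfl, rfl⟩))

-- relations of `a_{n+1}` in the affine braid group
lemma B_tcomm (i : ℕ) (h1 : 1 ≤ i) (h2 : i + 2 ≤ n) :
    sOf n (braidRelsAff n) i * PresentedGroup.of none
      = PresentedGroup.of none * sOf n (braidRelsAff n) i := by
  have hi : i < n := by omega
  rw [sOf_lt hi]
  exact rel_comm (Or.inr (Or.inr (Or.inl ⟨⟨i, hi⟩, h1, h2, rfl⟩)))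

lemma B_t0 (hn : 3 ≤ n) :
    sOf n (braidRelsAff n) 0 * PresentedGroup.of none * sOf n (braidRelsAff n) 0
      = PresentedGroup.of none * sOf n (braidRelsAff n) 0 * PresentedGroup.of none := by
  have h0 : (0 : ℕ) < n := by omega
  rw [sOf_lt h0]
  exact rel_braid (Or.inr (Or.inr (Or.inr ⟨⟨0, h0⟩, Or.inl rfl, rfl⟩)))

lemma B_tn (hn : 3 ≤ n) :
    sOf n (braidRelsAff n) (n - 1) * PresentedGroup.of none * sOf n (braidRelsAff n) (n - 1)
      = PresentedGroup.of none * sOf n (braidRelsAff n) (n - 1) * PresentedGroup.of none := by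
  have h0 : n - 1 < n := by omega
  rw [sOf_lt h0]
  exact rel_braid (Or.inr (Or.inr (Or.inr ⟨⟨n - 1, h0⟩, Or.inr (by simp; omega), rfl⟩)))

-- relations of `a` in the parabolic-like presentation
lemma P_k3 (hn : 3 ≤ n) :
    sOf n (parabRels n) 0 * PresentedGroup.of none * sOf n (parabRels n) 0
      = PresentedGroup.of none * sOf n (parabRels n) 0 * PresentedGroup.of none := by
  have h0 : (0 : ℕ) < n := by omega
  rw [sOf_lt h0]
  exact rel_braid (Or.inr (Or.inr (Or.inl ⟨⟨0, h0⟩, Or.inl rfl, rfl⟩)))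

lemma P_k4 (hn : 3 ≤ n) :
    sOf n (parabRels n) 2 * PresentedGroup.of none * sOf n (parabRels n) 2
      = PresentedGroup.of none * sOf n (parabRels n) 2 * PresentedGroup.of none := by
  have h0 : (2 : ℕ) < n := by omega
  rw [sOf_lt h0]
  exact rel_braid (Or.inr (Or.inr (Or.inl ⟨⟨2, h0⟩, Or.inr rfl, rfl⟩)))

lemma P_k5 (i : ℕ) (h1 : 3 ≤ i) (h2 : i < n) :
    sOf n (parabRels n) i * PresentedGroup.of none
      = PresentedGroup.of none * sOf n (parabRels n) i := by
  rw [sOf_lt h2]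
  exact rel_comm (Or.inr (Or.inr (Or.inr (Or.inl ⟨⟨i, h2⟩, h1, rfl⟩))))

lemma P_k6 (hn : 3 ≤ n) :
    sOf n (parabRels n) 2 * sOf n (parabRels n) 1 * PresentedGroup.of none *
        sOf n (parabRels n) 2
      = sOf n (parabRels n) 1 * PresentedGroup.of none * sOf n (parabRels n) 2 *
        sOf n (parabRels n) 1 := by
  have h1 : (1 : ℕ) < n := by omega
  have h2 : (2 : ℕ) < n := by omega
  rw [sOf_lt h1, sOf_lt h2]
  exact rel_four (Or.inr (Or.inr (Or.inr (Or.inr ⟨⟨1, h1⟩, ⟨2, h2⟩, rfl, rfl, rfl⟩))))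

end Inst

end Stmt5Aux
namespace Stmt5Aux

open PresentedGroup

section Main

variable {n : ℕ}

/-- Forward generator map: parabolic presentation → affine braid group. -/
def fFun (n : ℕ) : Option (Fin n) → BraidAff n
  | none => Pw (sOf n (braidRelsAff n)) 2 (n - 2) * PresentedGroup.of none *
      (Pw (sOf n (braidRelsAff n)) 2 (n - 2))⁻¹
  | some i => PresentedGroup.of (some i)

@[simp] lemma fFun_some (i : Fin n) : fFun n (some i) = PresentedGroup.of (some i) := rfl

@[simp] lemma fFun_none :
    fFun n none = Pw (sOf n (braidRelsAff n)) 2 (n - 2) * PresentedGroup.of none *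
      (Pw (sOf n (braidRelsAff n)) 2 (n - 2))⁻¹ := rfl

/-- Backward generator map: affine braid group → parabolic presentation. -/
def gFun (n : ℕ) : Option (Fin n) → PresentedGroup (parabRels n)
  | none => (Pw (sOf n (parabRels n)) 2 (n - 2))⁻¹ * PresentedGroup.of none *
      Pw (sOf n (parabRels n)) 2 (n - 2)
  | some i => PresentedGroup.of (some i)

@[simp] lemma gFun_some (i : Fin n) : gFun n (some i) = PresentedGroup.of (some i) := rfl

@[simp] lemma gFun_none :
    gFun n none = (Pw (sOf n (parabRels n)) 2 (n - 2))⁻¹ * PresentedGroup.of none *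
      Pw (sOf n (parabRels n)) 2 (n - 2) := rfl

lemma hphi (hn : 3 ≤ n) : ∀ r ∈ parabRels n, FreeGroup.lift (fFun n) r = 1 := by
  have D := braidDataB n
  have h3 : ∀ i, 1 ≤ i → i + 2 ≤ n →
      Commute (sOf n (braidRelsAff n) i) (PresentedGroup.of none) :=
    fun i a b => B_tcomm i a b
  intro r hr
  rcases hr with ⟨i, j, hij, rfl⟩ | ⟨i, j, hij, rfl⟩ | ⟨i, h02, rfl⟩ | ⟨i, h3i, rfl⟩ |
    ⟨i, j, h1, h2, rfl⟩
  · simp only [map_mul, map_inv, FreeGroup.lift_apply_of, fFun_some, mul_inv_eq_one]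
    rw [← sOf_coe i, ← sOf_coe j]
    exact (D.comm i j hij j.isLt).eq
  · simp only [map_mul, map_inv, FreeGroup.lift_apply_of, fFun_some, mul_inv_eq_one]
    rw [← sOf_coe i, ← sOf_coe j, hij]
    exact D.braid i (by rw [← hij]; exact j.isLt)
  · simp only [map_mul, map_inv, FreeGroup.lift_apply_of, fFun_some, fFun_none, mul_inv_eq_one]
    rcases h02 with h0 | h2'
    · rw [← sOf_coe i, h0]
      exact D.fwdA0 hn (B_t0 hn)
    · rw [← sOf_coe i, h2']
      exact D.fwdA2 hn h3 (B_tn hn)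
  · simp only [map_mul, map_inv, FreeGroup.lift_apply_of, fFun_some, fFun_none, mul_inv_eq_one]
    rw [← sOf_coe i, show (i : ℕ) = ((i : ℕ) - 1) + 1 by omega]
    exact D.fwdAhigh hn h3 ((i : ℕ) - 1) (by omega) (by have := i.isLt; omega)
  · simp only [map_mul, map_inv, FreeGroup.lift_apply_of, fFun_some, fFun_none, mul_inv_eq_one]
    rw [← sOf_coe i, ← sOf_coe j, h1, h2]
    exact D.fwdA6 hn h3

lemma hpsi (hn : 3 ≤ n) : ∀ r ∈ braidRelsAff n, FreeGroup.lift (gFun n) r = 1 := by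
  have D := braidDataP n
  have k5 : ∀ i, 3 ≤ i → i < n →
      Commute (sOf n (parabRels n) i) (PresentedGroup.of none) :=
    fun i a b => P_k5 i a b
  intro r hr
  rcases hr with ⟨i, j, hij, rfl⟩ | ⟨i, j, hij, rfl⟩ | ⟨i, h1i, h2i, rfl⟩ | ⟨i, h0n, rfl⟩
  · simp only [map_mul, map_inv, FreeGroup.lift_apply_of, gFun_some, mul_inv_eq_one]
    rw [← sOf_coe i, ← sOf_coe j]
    exact (D.comm i j hij j.isLt).eq
  · simp only [map_mul, map_inv, FreeGroup.lift_apply_of, gFun_some, mul_inv_eq_one]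
    rw [← sOf_coe i, ← sOf_coe j, hij]
    exact D.braid i (by rw [← hij]; exact j.isLt)
  · simp only [map_mul, map_inv, FreeGroup.lift_apply_of, gFun_some, gFun_none, mul_inv_eq_one]
    rw [← sOf_coe i]
    rcases Nat.lt_or_ge (i : ℕ) 2 with hlt | hge
    · rw [show (i : ℕ) = 1 by omega]
      exact D.bwdT1 hn (P_k6 hn)
    · exact D.bwdTmid hn k5 (i : ℕ) hge (by omega)
  · simp only [map_mul, map_inv, FreeGroup.lift_apply_of, gFun_some, gFun_none, mul_inv_eq_one]
    rcases h0n with h0 | hnn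
    · rw [← sOf_coe i, h0]
      exact D.bwdT0 hn (P_k3 hn)
    · rw [← sOf_coe i, show (i : ℕ) = n - 1 by omega]
      exact D.bwdTn hn k5 (P_k4 hn)

lemma map_Pw {H K : Type*} [Group H] [Group K] (F : H →* K) {s : ℕ → H} {s' : ℕ → K}
    (hs : ∀ i, F (s i) = s' i) (a m : ℕ) : F (Pw s a m) = Pw s' a m := by
  rw [Pw, map_list_prod, List.map_map, Pw]
  exact congrArg List.prod (List.map_congr_left fun i _ => hs i)

/-- The forward homomorphism. -/
noncomputable def phiHom (n : ℕ) (hn : 3 ≤ n) :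
    PresentedGroup (parabRels n) →* BraidAff n := toGroup (hphi hn)

/-- The backward homomorphism. -/
noncomputable def psiHom (n : ℕ) (hn : 3 ≤ n) :
    BraidAff n →* PresentedGroup (parabRels n) := toGroup (hpsi hn)

lemma psi_sOf (hn : 3 ≤ n) (i : ℕ) :
    psiHom n hn (sOf n (braidRelsAff n) i) = sOf n (parabRels n) i := by
  by_cases h : i < n
  · rw [sOf_lt (rels := braidRelsAff n) h, sOf_lt (rels := parabRels n) h]
    simp [psiHom, toGroup.of]
  · rw [sOf, dif_neg h, sOf, dif_neg h, map_one]

lemma phi_sOf (hn : 3 ≤ n) (i : ℕ) :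
    phiHom n hn (sOf n (parabRels n) i) = sOf n (braidRelsAff n) i := by
  by_cases h : i < n
  · rw [sOf_lt (rels := parabRels n) h, sOf_lt (rels := braidRelsAff n) h]
    simp [phiHom, toGroup.of]
  · rw [sOf, dif_neg h, sOf, dif_neg h, map_one]

lemma comp1 (hn : 3 ≤ n) : (psiHom n hn).comp (phiHom n hn) = MonoidHom.id _ := by
  ext x
  cases x with
  | some i => simp [phiHom, psiHom, toGroup.of]
  | none =>
    show psiHom n hn (phiHom n hn (PresentedGroup.of none)) = PresentedGroup.of none
    rw [phiHom, toGroup.of, fFun_none, map_mul, map_mul, map_inv,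
      map_Pw (psiHom n hn) (psi_sOf hn)]
    rw [show (psiHom n hn) (PresentedGroup.of none) = gFun n none from toGroup.of _, gFun_none]
    group

lemma comp2 (hn : 3 ≤ n) : (phiHom n hn).comp (psiHom n hn) = MonoidHom.id _ := by
  ext x
  cases x with
  | some i => simp [phiHom, psiHom, toGroup.of]
  | none =>
    show phiHom n hn (psiHom n hn (PresentedGroup.of none)) = PresentedGroup.of none
    rw [psiHom, toGroup.of, gFun_none, map_mul, map_mul, map_inv,
      map_Pw (phiHom n hn) (phi_sOf hn)]
    rw [show (phiHom n hn) (PresentedGroup.of none) = fFun n none from toGroup.of _, fFun_none]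
    group

lemma conjWord_eq (n : ℕ) : conjWord n = Pw (sOf n (braidRelsAff n)) 2 (n - 2) := by
  rw [conjWord, Pw]
  congr 1
  apply List.ext_getElem
  · simp
  · intro i h1 h2
    simp only [List.length_map, List.length_drop, List.length_finRange] at h1
    simp only [List.getElem_map, List.getElem_drop, List.getElem_finRange,
      List.getElem_range']
    rw [sOf_lt (by omega : 2 + 1 * i < n)]
    congr 1
    apply congrArg
    ext
    simp

end Main

end Stmt5Aux

theorem stmt_5 (n : ℕ) (hn : 3 ≤ n) :
    ∃ e : PresentedGroup (parabRels n) ≃* BraidAff n,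
      (∀ i : Fin n, e (PresentedGroup.of (some i)) = PresentedGroup.of (some i)) ∧
      e (PresentedGroup.of none) = a3 n := by
  open Stmt5Aux in
  refine ⟨MonoidHom.toMulEquiv (Stmt5Aux.phiHom n hn) (Stmt5Aux.psiHom n hn)
    (Stmt5Aux.comp1 hn) (Stmt5Aux.comp2 hn), fun i => ?_, ?_⟩
  · show Stmt5Aux.phiHom n hn (PresentedGroup.of (some i)) = PresentedGroup.of (some i)
    simp [Stmt5Aux.phiHom, PresentedGroup.toGroup.of]
  · show Stmt5Aux.phiHom n hn (PresentedGroup.of none) = a3 n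
    rw [Stmt5Aux.phiHom, PresentedGroup.toGroup.of, Stmt5Aux.fFun_none, a3,
      Stmt5Aux.conjWord_eq]
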